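/- For integers m_1 ≥ m_2 ≥ 0 one has C(m_1,m_2) = (m_2(2m_1+3)(2m_1+7)(m_2+2))/(4(m_1+2)(m_1+3)(2m_2+1)(2m_2+3)); in particular C(m_1,m_2) = 0 if and only if m_2 = 0. -/

import Mathlib

open Finset

/-- A tuple of integers is dominant if its entries are weakly decreasing and nonnegative. -/
def Dominant {r : ℕ} (m : Fin r → ℤ) : Prop :=
  (∀ j k : Fin r, j ≤ k → m k ≤ m j) ∧ ∀ j : Fin r, 0 ≤ m j

instance {r : ℕ} (m : Fin r → ℤ) : Decidable (Dominant m) := by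
  unfold Dominant; infer_instance

/-- The genus `p = (e+1) + (r-1)d + b/2`. -/
noncomputable def genusP (r : ℕ) (b d e : ℝ) : ℝ := (e + 1) + ((r : ℝ) - 1) * d + b / 2

/-- `n = r(p + b/2)`. -/
noncomputable def dimN (r : ℕ) (b d e : ℝ) : ℝ := r * (genusP r b d e + b / 2)

/-- `ρ_k = (r-k)d/2 + e/2 + b/4` (1-indexed `k`). -/
noncomputable def rho (r : ℕ) (b d e : ℝ) (k : Fin r) : ℝ :=
  ((r : ℝ) - ((k : ℕ) + 1)) * d / 2 + e / 2 + b / 4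

/-- The coefficient `A(m,k)`. -/
noncomputable def Acoef (r : ℕ) (b d e : ℝ) (m : Fin r → ℤ) (k : Fin r) : ℝ :=
  (genusP r b d e / (2 * dimN r b d e)) *
    ((2 * ((m k : ℝ) + rho r b d e k) + b / 2 + 1) *
        (2 * ((m k : ℝ) + rho r b d e k) + b / 2 + e)) /
      ((2 * ((m k : ℝ) + rho r b d e k)) * (2 * ((m k : ℝ) + rho r b d e k) + 1)) *
    ∏ j ∈ univ.erase k,
      ((((m k : ℝ) + rho r b d e k) - ((m j : ℝ) + rho r b d e j) + d / 2) *
          (((m k : ℝ) + rho r b d e k) + ((m j : ℝ) + rho r b d e j) + d / 2)) /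
        ((((m k : ℝ) + rho r b d e k) - ((m j : ℝ) + rho r b d e j)) *
          (((m k : ℝ) + rho r b d e k) + ((m j : ℝ) + rho r b d e j)))

/-- The coefficient `B(m,k)`. -/
noncomputable def Bcoef (r : ℕ) (b d e : ℝ) (m : Fin r → ℤ) (k : Fin r) : ℝ :=
  (genusP r b d e / (2 * dimN r b d e)) *
    ((2 * ((m k : ℝ) + rho r b d e k) - b / 2 - 1) *
        (2 * ((m k : ℝ) + rho r b d e k) - b / 2 - e)) /
      ((2 * ((m k : ℝ) + rho r b d e k)) * (2 * ((m k : ℝ) + rho r b d e k) - 1)) *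
    ∏ j ∈ univ.erase k,
      ((((m k : ℝ) + rho r b d e k) + ((m j : ℝ) + rho r b d e j) - d / 2) *
          (((m k : ℝ) + rho r b d e k) - ((m j : ℝ) + rho r b d e j) - d / 2)) /
        ((((m k : ℝ) + rho r b d e k) + ((m j : ℝ) + rho r b d e j)) *
          (((m k : ℝ) + rho r b d e k) - ((m j : ℝ) + rho r b d e j)))

/-- The coefficient `C(m)`. -/
noncomputable def Ccoef (r : ℕ) (b d e : ℝ) (m : Fin r → ℤ) : ℝ :=
  1 - (∑ k ∈ univ.filter (fun k : Fin r =>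
        Dominant (fun j => m j + if j = k then 1 else 0)), Acoef r b d e m k)
    - (∑ k ∈ univ.filter (fun k : Fin r =>
        Dominant (fun j => m j - if j = k then 1 else 0)), Bcoef r b d e m k)

/-! If `m` is dominant and `m + e_k` is not, then `m_(k-1) = m_k`, and since `ρ_(k-1) - ρ_k = d/2`
the factor `(m_k + ρ_k) - (m_(k-1) + ρ_(k-1)) + d/2` of `A(m,k)` vanishes. Likewise `B(m,k)` vanishes
when `m - e_k` leaves the dominant cone: either `m_(k+1) = m_k`, or `k = r` and `m_k = 0`, where the
factor `2(m_k + ρ_k) - b/2 - e` vanishes. So `C(m) = 1 - ∑ A(m,k) - ∑ B(m,k)` over all `k`, and for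
`𝔢₆₍₆₎` this is one rational function of `u = m_1 + 5/2`, `v = m_2 + 1`, which factors as stated. -/

section General

variable {r : ℕ} {b d e : ℝ} {m : Fin r → ℤ}

theorem rho_sub_rho (j k : Fin r) :
    rho r b d e j - rho r b d e k = ((k : ℕ) - (j : ℕ) : ℝ) * d / 2 := by
  simp only [rho]; ring

theorem exists_pred_eq_of_not_dominant_add (hm : Dominant m) {k : Fin r}
    (hk : ¬ Dominant (fun j => m j + if j = k then 1 else 0)) :
    ∃ j : Fin r, (j : ℕ) + 1 = k ∧ m j = m k := by
  obtain ⟨hmono, hnonneg⟩ := hm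
  simp only [Dominant, not_and_or, not_forall, not_le] at hk
  rcases hk with ⟨j, i, hji, hlt⟩ | ⟨j, hneg⟩
  · have hi : i = k := by by_contra hi; split_ifs at hlt <;> linarith [hmono j i hji]
    have hj : j ≠ k := by rintro rfl; exact absurd hlt (by simp [hi])
    subst hi
    have hjk : j < i := lt_of_le_of_ne hji hj
    have hpos : 0 < (i : ℕ) := lt_of_le_of_lt (Nat.zero_le _) hjk
    refine ⟨⟨i - 1, by omega⟩, by simp; omega, le_antisymm ?_ (hmono _ _ ?_)⟩
    · simp only [hj, if_false, if_true] at hlt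
      exact (hmono j _ (Fin.le_def.2 (by simp; omega))).trans (by linarith [hmono j i hji])
    · exact Fin.le_def.2 (by simp)
  · split_ifs at hneg <;> linarith [hnonneg j]

theorem exists_succ_eq_of_not_dominant_sub (hm : Dominant m) {k : Fin r}
    (hk : ¬ Dominant (fun j => m j - if j = k then 1 else 0)) :
    (∃ i : Fin r, (k : ℕ) + 1 = i ∧ m i = m k) ∨ ((k : ℕ) + 1 = r ∧ m k = 0) := by
  obtain ⟨hmono, hnonneg⟩ := hm
  simp only [Dominant, not_and_or, not_forall, not_le] at hk
  rcases hk with ⟨j, i, hji, hlt⟩ | ⟨j, hneg⟩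
  · have hj : j = k := by by_contra hj; split_ifs at hlt <;> linarith [hmono j i hji]
    have hi : i ≠ k := by rintro rfl; exact absurd hlt (by simp [hj])
    subst hj
    have hji' : (j : ℕ) < i := Fin.lt_def.1 (lt_of_le_of_ne hji (Ne.symm hi))
    simp only [hi, if_false, if_true] at hlt
    refine .inl ⟨⟨j + 1, by omega⟩, rfl, le_antisymm (hmono _ _ (Fin.le_def.2 (by simp))) ?_⟩
    exact (by linarith [hmono j i hji] : m j ≤ m i).trans (hmono _ _ (Fin.le_def.2 (by simp; omega)))
  · have hj : j = k := by by_contra hj; simp only [hj, if_false] at hneg; linarith [hnonneg j]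
    subst hj
    have hzero : m j = 0 := by simp only [if_true] at hneg; linarith [hnonneg j]
    by_cases hlast : (j : ℕ) + 1 = r
    · exact .inr ⟨hlast, hzero⟩
    · exact .inl ⟨⟨j + 1, by omega⟩, rfl,
        le_antisymm (hmono j _ (Fin.le_def.2 (by simp))) (hzero.trans_le (hnonneg _))⟩

theorem Acoef_eq_zero_of_pred_eq {k j : Fin r} (hjk : (j : ℕ) + 1 = k) (hm : m j = m k) :
    Acoef r b d e m k = 0 := by
  have hne : j ≠ k := by rintro rfl; omega
  have hwall : ((m k : ℝ) + rho r b d e k) - ((m j : ℝ) + rho r b d e j) + d / 2 = 0 := by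
    rw [hm, add_sub_add_left_eq_sub, ← neg_sub, rho_sub_rho, ← hjk]; push_cast; ring
  rw [Acoef, prod_eq_zero (mem_erase.2 ⟨hne, mem_univ j⟩) (by rw [hwall, zero_mul, zero_div]),
    mul_zero]

theorem Bcoef_eq_zero_of_succ_eq {k i : Fin r} (hki : (k : ℕ) + 1 = i) (hm : m i = m k) :
    Bcoef r b d e m k = 0 := by
  have hne : i ≠ k := by rintro rfl; omega
  have hwall : ((m k : ℝ) + rho r b d e k) - ((m i : ℝ) + rho r b d e i) - d / 2 = 0 := by
    rw [hm, add_sub_add_left_eq_sub, rho_sub_rho, ← hki]; push_cast; ring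
  rw [Bcoef, prod_eq_zero (mem_erase.2 ⟨hne, mem_univ i⟩) (by rw [hwall, mul_zero, zero_div]),
    mul_zero]

theorem Bcoef_eq_zero_of_last_eq_zero {k : Fin r} (hk : (k : ℕ) + 1 = r) (hm : m k = 0) :
    Bcoef r b d e m k = 0 := by
  have hwall : 2 * ((m k : ℝ) + rho r b d e k) - b / 2 - e = 0 := by
    have hr : (r : ℝ) = (k : ℕ) + 1 := by exact_mod_cast hk.symm
    rw [hm, rho, hr]; push_cast; ring
  rw [Bcoef, hwall, mul_zero, mul_zero, zero_div, zero_mul]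

theorem Ccoef_eq_of_dominant (hm : Dominant m) :
    Ccoef r b d e m = 1 - ∑ k, Acoef r b d e m k - ∑ k, Bcoef r b d e m k := by
  rw [Ccoef, sum_filter_of_ne, sum_filter_of_ne]
  · intro k _ hB
    by_contra hk
    rcases exists_succ_eq_of_not_dominant_sub hm hk with ⟨i, hki, hmi⟩ | ⟨hlast, hzero⟩
    · exact hB (Bcoef_eq_zero_of_succ_eq hki hmi)
    · exact hB (Bcoef_eq_zero_of_last_eq_zero hlast hzero)
  · intro k _ hA
    by_contra hk
    obtain ⟨j, hjk, hmj⟩ := exists_pred_eq_of_not_dominant_add hm hk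
    exact hA (Acoef_eq_zero_of_pred_eq hjk hmj)

end General

theorem dominant_fin_two_iff (v : Fin 2 → ℤ) : Dominant v ↔ v 1 ≤ v 0 ∧ 0 ≤ v 1 := by
  constructor
  · rintro ⟨hmono, hnonneg⟩; exact ⟨hmono 0 1 (by decide), hnonneg 1⟩
  · rintro ⟨h10, h1⟩
    refine ⟨fun j k hjk => ?_, fun j => ?_⟩
    · fin_cases j <;> fin_cases k <;> simp_all
    · fin_cases j <;> simp_all; omega

theorem e6_split_identity (u v : ℝ) (hv : 1 ≤ v) (huv : v + 3 / 2 ≤ u) :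
    1 - (3 / 16 * ((2 * u + 2 + 1) * (2 * u + 2)) / (2 * u * (2 * u + 1)) *
            ((u - v + 3 / 2) * (u + v + 3 / 2) / ((u - v) * (u + v))) +
          3 / 16 * ((2 * v + 2 + 1) * (2 * v + 2)) / (2 * v * (2 * v + 1)) *
            ((v - u + 3 / 2) * (v + u + 3 / 2) / ((v - u) * (v + u)))) -
      (3 / 16 * ((2 * u - 2 - 1) * (2 * u - 2)) / (2 * u * (2 * u - 1)) *
          ((u + v - 3 / 2) * (u - v - 3 / 2) / ((u + v) * (u - v))) +
        3 / 16 * ((2 * v - 2 - 1) * (2 * v - 2)) / (2 * v * (2 * v - 1)) *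
          ((v + u - 3 / 2) * (v - u - 3 / 2) / ((v + u) * (v - u)))) =
    (v - 1) * (2 * u - 2) * (2 * u + 2) * (v + 1) /
      (4 * (u - 1 / 2) * (u + 1 / 2) * (2 * v - 1) * (2 * v + 1)) := by
  have : u - v ≠ 0 := by linarith
  have : v - u ≠ 0 := by linarith
  have : 2 * v - 1 ≠ 0 := by linarith
  have : 2 * u - 1 ≠ 0 := by linarith
  have : u - 1 / 2 ≠ 0 := by linarith
  have : u ≠ 0 := by linarith
  have : v ≠ 0 := by linarith
  have : u + v ≠ 0 := by linarith
  have : v + u ≠ 0 := by linarith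
  have : 2 * u + 1 ≠ 0 := by linarith
  have : 2 * v + 1 ≠ 0 := by linarith
  field_simp
  ring

theorem Ccoef_e6_split_eq (m : Fin 2 → ℤ) (hm : Dominant m) :
    Ccoef 2 4 3 0 m
        = (m 1 : ℝ) * (2 * (m 0 : ℝ) + 3) * (2 * (m 0 : ℝ) + 7) * ((m 1 : ℝ) + 2) /
          (4 * ((m 0 : ℝ) + 2) * ((m 0 : ℝ) + 3) * (2 * (m 1 : ℝ) + 1) * (2 * (m 1 : ℝ) + 3)) := by
  obtain ⟨h10, h1⟩ := (dominant_fin_two_iff m).1 hm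
  have hy : (0 : ℝ) ≤ m 1 := by exact_mod_cast h1
  have hxy : (m 1 : ℝ) ≤ m 0 := by exact_mod_cast h10
  have e0 : univ.erase (0 : Fin 2) = {1} := by decide
  have e1 : univ.erase (1 : Fin 2) = {0} := by decide
  rw [Ccoef_eq_of_dominant hm]
  simp only [Fin.sum_univ_two, Acoef, Bcoef, e0, e1, prod_singleton, rho, genusP, dimN]
  norm_num
  linear_combination e6_split_identity ((m 0 : ℝ) + 5 / 2) ((m 1 : ℝ) + 1) (by linarith) (by linarith)

theorem e6_closed_form_eq_zero_iff {x y : ℝ} (hx : 0 ≤ x) (hy : 0 ≤ y) :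
    y * (2 * x + 3) * (2 * x + 7) * (y + 2) /
        (4 * (x + 2) * (x + 3) * (2 * y + 1) * (2 * y + 3)) = 0 ↔ y = 0 := by
  have hden : 4 * (x + 2) * (x + 3) * (2 * y + 1) * (2 * y + 3) ≠ 0 := by positivity
  have h3 : 2 * x + 3 ≠ 0 := by positivity
  have h7 : 2 * x + 7 ≠ 0 := by positivity
  have h2 : y + 2 ≠ 0 := by positivity
  simp only [div_eq_zero_iff, hden, mul_eq_zero, h3, h7, h2, or_false]

theorem Cm_e6_split (m : Fin 2 → ℤ) (hm : Dominant m) :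
    Ccoef 2 4 3 0 m
        = (m 1 : ℝ) * (2 * (m 0 : ℝ) + 3) * (2 * (m 0 : ℝ) + 7) * ((m 1 : ℝ) + 2) /
          (4 * ((m 0 : ℝ) + 2) * ((m 0 : ℝ) + 3) * (2 * (m 1 : ℝ) + 1) * (2 * (m 1 : ℝ) + 3)) ∧
      (Ccoef 2 4 3 0 m = 0 ↔ m 1 = 0) := by
  obtain ⟨h10, h1⟩ := (dominant_fin_two_iff m).1 hm
  have hx : (0 : ℝ) ≤ m 0 := by exact_mod_cast h1.trans h10
  have hy : (0 : ℝ) ≤ m 1 := by exact_mod_cast h1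
  rw [Ccoef_e6_split_eq m hm, e6_closed_form_eq_zero_iff hx hy, Int.cast_eq_zero]
  exact ⟨rfl, Iff.rfl⟩
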